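/- arXiv:2303.07435 — 3 statements merged into one kernel-verified Lean document; each statement's English description precedes it below -/
import Mathlib

section
/- With A, u_s, u_p, S, and the partition P as in the satisficing setup, fix an observed action a⁰ ∈ A. Call γ 'rationalisable' if S(u_s(a⁰), u_p(a⁰), γ) ≥ S(u_s(a'), u_p(a'), γ) for all a' ∈ A. Then for every interval I ∈ P, either all γ ∈ I are rationalisable or none are. -/
/-- Satisficing (lexicographic-threshold) scalarization. -/
noncomputable def S (x y γ : ℝ) : ℝ := if x ≤ γ then x else y

/-- The partition cell of `[-1,1]` whose closed left endpoint is `c`. -/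
def cell (E : Finset ℝ) (c : ℝ) : Set ℝ :=
  {x | x ∈ Set.Icc (-1:ℝ) 1 ∧ c ≤ x ∧ ∀ c' ∈ E, c' ≤ x → c' ≤ c}

/-- The partition of `[-1,1]` induced by endpoint set `E`. -/
def partitionOf (E : Finset ℝ) : Set (Set ℝ) := {I | ∃ c ∈ E, I = cell E c}

/-- `γ` is rationalisable for observed action `a0`. -/
noncomputable def Rationalisable {A : Type*} (us up : A → ℝ) (a0 : A) (γ : ℝ) : Prop :=
  ∀ a' : A, S (us a') (up a') γ ≤ S (us a0) (up a0) γ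

theorem rationalisable_all_or_none {A : Type*} [Fintype A] [Nonempty A]
    (us up : A → ℝ) (a0 : A)
    (hus : ∀ a, us a ∈ Set.Icc (-1:ℝ) 1) (hup : ∀ a, up a ∈ Set.Icc (-1:ℝ) 1) :
    ∀ I ∈ partitionOf (insert (-1) (Finset.image us Finset.univ)),
      (∀ γ ∈ I, Rationalisable us up a0 γ) ∨ (∀ γ ∈ I, ¬ Rationalisable us up a0 γ) := by
  intro I hI
  obtain ⟨c, hc, rfl⟩ := hI
  set E := insert (-1 : ℝ) (Finset.image us Finset.univ) with hE
  have key : ∀ γ ∈ cell E c, ∀ a, S (us a) (up a) γ = S (us a) (up a) c := by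
    intro γ hγ a
    obtain ⟨_, hcγ, hmax⟩ := hγ
    have hmem : us a ∈ E := by
      simp [hE, Finset.mem_insert, Finset.mem_image]
    have hiff : us a ≤ γ ↔ us a ≤ c :=
      ⟨fun h => hmax _ hmem h, fun h => le_trans h hcγ⟩
    unfold S
    by_cases h : us a ≤ c
    · rw [if_pos (hiff.mpr h), if_pos h]
    · rw [if_neg (fun h' => h (hiff.mp h')), if_neg h]
  have keyR : ∀ γ ∈ cell E c, (Rationalisable us up a0 γ ↔ Rationalisable us up a0 c) := by
    intro γ hγ
    unfold Rationalisable
    constructor <;> intro h a' <;> have := h a'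
    · rwa [key γ hγ a', key γ hγ a0] at this
    · rwa [key γ hγ a', key γ hγ a0]
  by_cases hR : Rationalisable us up a0 c
  · exact Or.inl fun γ hγ => (keyR γ hγ).mpr hR
  · exact Or.inr fun γ hγ h => hR ((keyR γ hγ).mp h)
end

section
/- Let A_i and A_{-i} be finite nonempty action sets, u_s, u_p : A_i × A_{-i} → [-1,1], and S(x,y,γ) = x if x ≤ γ else y. Fix an observed action a⁰ ∈ A_i. Call γ 'maxmax rationalisable' if max_{b ∈ A_{-i}} S(u_s(a⁰,b), u_p(a⁰,b), γ) ≥ max_{b ∈ A_{-i}} S(u_s(a',b), u_p(a',b), γ) for all a' ∈ A_i. Let P_ns be the partition of [-1,1] whose interval endpoints are all distinct values of u_s over the full product A_i × A_{-i} (each value a closed left endpoint). Then for every interval I ∈ P_ns, either all γ ∈ I are maxmax rationalisable or none are. -/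
/-- `γ` is maxmax rationalisable for observed action `a0`: the best-case
scalarized utility of `a0` over opponent actions is at least that of every
alternative. -/
noncomputable def MaxmaxRationalisable {Ai Am : Type*} [Fintype Am] [Nonempty Am]
    (us up : Ai × Am → ℝ) (a0 : Ai) (γ : ℝ) : Prop :=
  ∀ a' : Ai,
    Finset.univ.sup' Finset.univ_nonempty (fun b => S (us (a', b)) (up (a', b)) γ) ≤
      Finset.univ.sup' Finset.univ_nonempty (fun b => S (us (a0, b)) (up (a0, b)) γ)

lemma S_const_on_cell (E : Finset ℝ) (c : ℝ) {γ₁ γ₂ : ℝ}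
    (h1 : γ₁ ∈ cell E c) (h2 : γ₂ ∈ cell E c) {x : ℝ} (hx : x ∈ E) (y : ℝ) :
    S x y γ₁ = S x y γ₂ := by
  obtain ⟨_, hc1, hmax1⟩ := h1
  obtain ⟨_, hc2, hmax2⟩ := h2
  have key : (x ≤ γ₁) ↔ (x ≤ γ₂) := by
    constructor
    · intro h; exact le_trans (hmax1 x hx h) hc2
    · intro h; exact le_trans (hmax2 x hx h) hc1
  unfold S
  by_cases h : x ≤ γ₁
  · rw [if_pos h, if_pos (key.mp h)]
  · rw [if_neg h, if_neg (fun h' => h (key.mpr h'))]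

theorem maxmax_rationalisable_all_or_none {Ai Am : Type*}
    [Fintype Ai] [Nonempty Ai] [Fintype Am] [Nonempty Am]
    (us up : Ai × Am → ℝ) (a0 : Ai)
    (hus : ∀ p, us p ∈ Set.Icc (-1:ℝ) 1) (hup : ∀ p, up p ∈ Set.Icc (-1:ℝ) 1) :
    ∀ I ∈ partitionOf (insert (-1) (Finset.image us Finset.univ)),
      (∀ γ ∈ I, MaxmaxRationalisable us up a0 γ) ∨
        (∀ γ ∈ I, ¬ MaxmaxRationalisable us up a0 γ) := by
  intro I hI
  obtain ⟨c, hc, rfl⟩ := hI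
  set E := insert (-1 : ℝ) (Finset.image us Finset.univ) with hE
  have hmem : ∀ p : Ai × Am, us p ∈ E := fun p =>
    Finset.mem_insert_of_mem (Finset.mem_image.mpr ⟨p, Finset.mem_univ p, rfl⟩)
  have hconst : ∀ γ₁ ∈ cell E c, ∀ γ₂ ∈ cell E c,
      MaxmaxRationalisable us up a0 γ₁ → MaxmaxRationalisable us up a0 γ₂ := by
    intro γ₁ h1 γ₂ h2 hR a'
    have hsup : ∀ a : Ai,
        Finset.univ.sup' Finset.univ_nonempty (fun b => S (us (a, b)) (up (a, b)) γ₂) =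
        Finset.univ.sup' Finset.univ_nonempty (fun b => S (us (a, b)) (up (a, b)) γ₁) := by
      intro a
      apply Finset.sup'_congr
      · rfl
      · intro b _
        exact S_const_on_cell E c h2 h1 (hmem (a, b)) _
    rw [hsup a', hsup a0]
    exact hR a'
  by_cases h : ∃ γ ∈ cell E c, MaxmaxRationalisable us up a0 γ
  · obtain ⟨γ, hγ, hR⟩ := h
    exact Or.inl (fun γ' hγ' => hconst γ hγ γ' hγ' hR)
  · exact Or.inr (fun γ hγ hR => h ⟨γ, hγ, hR⟩)
end

section
/- Let A be a finite nonempty set, u_s, u_p : A → ℝ, S(x,y,γ) = x if x ≤ γ else y, and fix a⁰ ∈ A. The set Γ = { γ ∈ ℝ : S(u_s(a⁰),u_p(a⁰),γ) ≥ S(u_s(a'),u_p(a'),γ) for all a' ∈ A } is a finite union of intervals whose endpoints (other than ±∞) belong to the set of values { u_s(a) : a ∈ A }. -/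
theorem rationalisable_set_union_of_intervals {A : Type*} [Fintype A] [Nonempty A]
    (us up : A → ℝ) (a0 : A) :
    ∃ T : Finset (Set ℝ),
      {γ : ℝ | ∀ a' : A, S (us a') (up a') γ ≤ S (us a0) (up a0) γ} = ⋃₀ ↑T ∧
      ∀ I ∈ T, I.OrdConnected ∧
        (∀ x : ℝ, IsGLB I x → x ∈ Set.range us) ∧
        (∀ x : ℝ, IsLUB I x → x ∈ Set.range us) := by
  classical
  set Γ : Set ℝ := {γ : ℝ | ∀ a' : A, S (us a') (up a') γ ≤ S (us a0) (up a0) γ} with hΓ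
  set cell : ℝ → Set ℝ := fun γ => {δ | ∀ a, (us a ≤ δ ↔ us a ≤ γ)} with hcell
  have hself : ∀ γ, γ ∈ cell γ := fun γ a => Iff.rfl
  have hSconst : ∀ γ δ, δ ∈ cell γ → ∀ a, S (us a) (up a) δ = S (us a) (up a) γ := by
    intro γ δ hδ a
    simp only [S]
    by_cases h : us a ≤ γ
    · rw [if_pos ((hδ a).2 h), if_pos h]
    · rw [if_neg (fun hc => h ((hδ a).1 hc)), if_neg h]
  have hcellΓ : ∀ γ ∈ Γ, cell γ ⊆ Γ := by
    intro γ hγ δ hδ a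
    rw [hSconst γ δ hδ a, hSconst γ δ hδ a0]
    exact hγ a
  have hCfin : {s : Set ℝ | ∃ γ ∈ Γ, s = cell γ}.Finite := by
    apply Set.Finite.subset
      (Set.finite_range (fun p : A → Prop => {δ : ℝ | ∀ a, (us a ≤ δ ↔ p a)}))
    rintro s ⟨γ, -, rfl⟩
    exact ⟨fun a => us a ≤ γ, rfl⟩
  refine ⟨hCfin.toFinset, ?_, ?_⟩
  · ext γ
    simp only [Finset.coe_sort_coe, Set.mem_sUnion, Set.Finite.coe_toFinset, Set.mem_setOf_eq]
    constructor
    · intro hγ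
      exact ⟨cell γ, ⟨γ, hγ, rfl⟩, hself γ⟩
    · rintro ⟨s, ⟨γ', hγ', rfl⟩, hmem⟩
      exact hcellΓ γ' hγ' hmem
  · intro I hI
    rw [Set.Finite.mem_toFinset] at hI
    obtain ⟨γ, -, rfl⟩ := hI
    refine ⟨⟨?_⟩, ?_, ?_⟩
    · -- OrdConnected
      intro x hx y hy z hz a
      constructor
      · intro h
        exact (hy a).1 (h.trans hz.2)
      · intro h
        exact ((hx a).2 h).trans hz.1
    · -- GLB
      intro x hx
      by_cases h : ∃ a, us a ≤ γ
      · obtain ⟨b, hb, hbmax⟩ :=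
          Finset.exists_max_image (Finset.univ.filter (fun a => us a ≤ γ))
            us (by obtain ⟨a, ha⟩ := h; exact ⟨a, Finset.mem_filter.2 ⟨Finset.mem_univ a, ha⟩⟩)
        have hbγ : us b ≤ γ := (Finset.mem_filter.1 hb).2
        have hbcell : us b ∈ cell γ := by
          intro a
          constructor
          · intro ha; exact ha.trans hbγ
          · intro ha; exact hbmax a (Finset.mem_filter.2 ⟨Finset.mem_univ a, ha⟩)
        have hlb : us b ∈ lowerBounds (cell γ) := fun δ hδ => (hδ b).2 hbγ
        exact ⟨b, le_antisymm (hx.2 hlb) (hx.1 hbcell)⟩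
      · push_neg at h
        exfalso
        have hγx : x ≤ γ := hx.1 (hself γ)
        have : (x - 1) ∈ cell γ := by
          intro a
          have := h a
          constructor
          · intro hc; linarith
          · intro hc; linarith
        linarith [hx.1 this]
    · -- LUB
      intro x hx
      by_cases h : ∃ a, ¬ us a ≤ γ
      · obtain ⟨b, hb, hbmin⟩ :=
          Finset.exists_min_image (Finset.univ.filter (fun a => ¬ us a ≤ γ))
            us (by obtain ⟨a, ha⟩ := h; exact ⟨a, Finset.mem_filter.2 ⟨Finset.mem_univ a, ha⟩⟩)
        have hbγ : γ < us b := lt_of_not_ge (Finset.mem_filter.1 hb).2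
        have hub : us b ∈ upperBounds (cell γ) := by
          intro δ hδ
          have : ¬ us b ≤ δ := fun hc => (Finset.mem_filter.1 hb).2 ((hδ b).1 hc)
          linarith [lt_of_not_ge this]
        have hxb : x ≤ us b := hx.2 hub
        have hbx : us b ≤ x := by
          by_contra hc
          push_neg at hc
          set δ := max γ ((x + us b) / 2) with hδdef
          have hδlt : δ < us b := max_lt hbγ (by linarith)
          have hδcell : δ ∈ cell γ := by
            intro a
            constructor
            · intro ha
              by_contra hna
              have : us b ≤ us a :=
                hbmin a (Finset.mem_filter.2 ⟨Finset.mem_univ a, hna⟩)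
              linarith
            · intro ha
              exact ha.trans (le_max_left _ _)
          have := hx.1 hδcell
          have h2 : (x + us b) / 2 ≤ δ := le_max_right _ _
          linarith
        exact ⟨b, le_antisymm hbx hxb⟩
      · push_neg at h
        exfalso
        have hγx : γ ≤ x := hx.1 (hself γ)
        have : (x + 1) ∈ cell γ := by
          intro a
          have := h a
          constructor
          · intro _; exact this
          · intro _; linarith
        linarith [hx.1 this]
end
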